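/- arXiv:1004.4057 — 6 statements merged into one kernel-verified Lean document; each statement's English description precedes it below -/
import Mathlib

section
/- Let A ∈ ℝ^{m×n}, let S, T ⊆ {1,…,m} be disjoint subsets, and let B = A − π_S(A). Then det(A_{S∪T} A_{S∪T}^T) = det(A_S A_S^T) · det(B_T B_T^T). -/
open Matrix BigOperators

noncomputable def projSpan {m n : ℕ} (A : Matrix (Fin m) (Fin n) ℝ) (S : Finset (Fin m)) :
    Matrix (Fin m) (Fin n) ℝ := fun i j =>
  (Submodule.orthogonalProjectionOnto
      (Submodule.span ℝ (Set.range (fun s : S => (WithLp.equiv 2 (Fin n → ℝ)).symm (A s))))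
      ((WithLp.equiv 2 (Fin n → ℝ)).symm (A i)) : EuclideanSpace ℝ (Fin n)) j

def rowSub {m n : ℕ} (A : Matrix (Fin m) (Fin n) ℝ) (S : Finset (Fin m)) :
    Matrix {x // x ∈ S} (Fin n) ℝ := fun i j => A i.1 j

noncomputable def gramDet {m n : ℕ} (A : Matrix (Fin m) (Fin n) ℝ) (S : Finset (Fin m)) : ℝ :=
  (rowSub A S * (rowSub A S)ᵀ).det

noncomputable def frobSq {m n : ℕ} (M : Matrix (Fin m) (Fin n) ℝ) : ℝ :=
  ∑ i, ∑ j, (M i j)^2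

noncomputable def specNorm {m n : ℕ} (M : Matrix (Fin m) (Fin n) ℝ) : ℝ :=
  ‖LinearMap.toContinuousLinearMap (Matrix.toEuclideanLin M)‖

/-! Stack the rows of `A_S` above those of `A_T`. Subtracting from each `T`-row its projection
onto the span of the `S`-rows is a unipotent block-triangular row operation, so it preserves the
Gram determinant, and it turns `A_T` into `B_T`. The new `T`-rows are orthogonal to the `S`-rows,
so the Gram matrix becomes block diagonal with blocks `A_S A_Sᵀ` and `B_T B_Tᵀ`. -/

namespace Matrix

variable {R : Type*} [CommRing R] {m p n : Type*} [Fintype m] [Fintype p] [Fintype n]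
  [DecidableEq m] [DecidableEq p]

theorem det_mul_transpose_submatrix_equiv (e : p ≃ m) (M : Matrix m n R) :
    (M.submatrix e id * (M.submatrix e id)ᵀ).det = (M * Mᵀ).det := by
  rw [transpose_submatrix, ← submatrix_mul _ _ _ _ _ Function.bijective_id,
    det_submatrix_equiv_self]

theorem det_fromRows_mul_transpose_of_mul_transpose_eq_zero (X : Matrix m n R)
    (Y : Matrix p n R) (h : X * Yᵀ = 0) :
    (fromRows X Y * (fromRows X Y)ᵀ).det = (X * Xᵀ).det * (Y * Yᵀ).det := by
  have h' : Y * Xᵀ = 0 := by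
    rw [← transpose_transpose (Y * Xᵀ), transpose_mul, transpose_transpose, h, transpose_zero]
  rw [transpose_fromRows, fromRows_mul_fromCols, h, h', det_fromBlocks_zero₂₁]

theorem det_fromRows_add_mul_mul_transpose (X : Matrix m n R) (Y : Matrix p n R)
    (C : Matrix p m R) :
    (fromRows X (Y + C * X) * (fromRows X (Y + C * X))ᵀ).det =
      (fromRows X Y * (fromRows X Y)ᵀ).det := by
  set E : Matrix (m ⊕ p) (m ⊕ p) R := fromBlocks 1 0 C 1
  have hE : fromRows X (Y + C * X) = E * fromRows X Y := by
    rw [fromBlocks_mul_fromRows]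
    simp [add_comm]
  rw [hE, transpose_mul, ← Matrix.mul_assoc, Matrix.mul_assoc E, det_mul, det_mul,
    det_transpose, det_fromBlocks_zero₁₂]
  simp

end Matrix

section RowSubmatrix

variable {m n : ℕ}

theorem submatrix_rowSub_union (A : Matrix (Fin m) (Fin n) ℝ) {S T : Finset (Fin m)}
    (hST : Disjoint S T) :
    (rowSub A (S ∪ T)).submatrix (Equiv.Finset.union S T hST) id =
      fromRows (rowSub A S) (rowSub A T) := by
  ext (i | i) j <;> rfl

theorem gramDet_union (A : Matrix (Fin m) (Fin n) ℝ) {S T : Finset (Fin m)} (hST : Disjoint S T) :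
    gramDet A (S ∪ T) =
      (fromRows (rowSub A S) (rowSub A T) * (fromRows (rowSub A S) (rowSub A T))ᵀ).det := by
  rw [gramDet, ← submatrix_rowSub_union A hST, det_mul_transpose_submatrix_equiv]

end RowSubmatrix

section Projection

variable {m n : ℕ} (A : Matrix (Fin m) (Fin n) ℝ) (S : Finset (Fin m))

def rowSpan : Submodule ℝ (WithLp 2 (Fin n → ℝ)) :=
  Submodule.span ℝ (Set.range fun s : S => WithLp.toLp 2 (A s))

theorem projSpan_apply (i : Fin m) :
    projSpan A S i = ((rowSpan A S).starProjection (WithLp.toLp 2 (A i))).ofLp :=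
  rfl

theorem exists_projSpan_eq_mul_rowSub :
    ∃ C : Matrix (Fin m) S ℝ, projSpan A S = C * rowSub A S := by
  have hcoeff : ∀ i, ∃ c : S → ℝ, ∑ s, c s • WithLp.toLp 2 (A s) =
      (rowSpan A S).starProjection (WithLp.toLp 2 (A i)) := fun i =>
    (Submodule.mem_span_range_iff_exists_fun ℝ).1 (Submodule.starProjection_apply_mem _ _)
  choose C hC using hcoeff
  refine ⟨of C, ?_⟩
  ext i j
  rw [projSpan_apply, ← hC i]
  simp [mul_apply, rowSub]

theorem rowSub_mul_transpose_sub_projSpan : rowSub A S * (A - projSpan A S)ᵀ = 0 := by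
  ext s i
  have hs : WithLp.toLp 2 (A s) ∈ rowSpan A S := Submodule.subset_span ⟨s, rfl⟩
  have h := (rowSpan A S).sub_starProjection_mem_orthogonal (WithLp.toLp 2 (A i)) _ hs
  rw [EuclideanSpace.inner_eq_star_dotProduct] at h
  simpa [mul_apply, dotProduct, projSpan_apply, rowSub, mul_comm] using h

end Projection

/-- Let A ∈ ℝ^{m×n}, S, T ⊆ {1,…,m} disjoint, B = A − π_S(A).
Then det(A_{S∪T} A_{S∪T}ᵀ) = det(A_S A_Sᵀ) · det(B_T B_Tᵀ). -/
theorem det_division {m n : ℕ} (A : Matrix (Fin m) (Fin n) ℝ) (S T : Finset (Fin m))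
    (hST : Disjoint S T) (B : Matrix (Fin m) (Fin n) ℝ) (hB : B = A - projSpan A S) :
    gramDet A (S ∪ T) = gramDet A S * gramDet B T := by
  obtain ⟨C, hC⟩ := exists_projSpan_eq_mul_rowSub A S
  have hT : rowSub A T = rowSub B T + C.submatrix (↑) id * rowSub A S := by
    ext t j
    simp [hB, hC, rowSub, mul_apply]
  have horth : rowSub A S * (rowSub B T)ᵀ = 0 := by
    ext s t
    rw [hB]
    exact congr_fun₂ (rowSub_mul_transpose_sub_projSpan A S) s t
  rw [gramDet_union A hST, hT, det_fromRows_add_mul_mul_transpose,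
    det_fromRows_mul_transpose_of_mul_transpose_eq_zero _ _ horth, gramDet, gramDet]
end

section
/- Let A ∈ ℝ^{m×n}, let S ⊆ {1,…,m}, let B = A − π_S(A), and let r ≥ 1 be an integer. Then ∑_{T ⊆ {1,…,m}\S, |T|=r} det(A_{S∪T} A_{S∪T}^T) · ‖A − π_{S∪T}(A)‖_F² = (r+1) · det(A_S A_S^T) · ∑_{T ⊆ {1,…,m}, |T|=r+1} det(B_T B_T^T). -/
open Matrix BigOperators

/-!
Write `G(V)` for the Gram determinant of a family of vectors. Base times height,
`G(V, w) = G(V) ‖w - π_V w‖²`, holds for any family (a unitriangular change of basis makes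
the Gram matrix block diagonal). Iterating it, with `B = A - π_S A`, gives
`G(A_{S∪T}) = G(A_S) G(B_T)` for `T` disjoint from `S`, because the span of `A_{S∪T}` is the
orthogonal sum of the spans of `A_S` and `B_T`; for the same reason `A - π_{S∪T} A = B - π_T B`.
Expanding the Frobenius norm row by row, `G(B_T) ‖B - π_T B‖_F² = ∑_{i ∉ T} G(B_{T+i})`, so the
left-hand side is `G(A_S)` times a sum over pairs `(T, i)` in which every `(r+1)`-set occurs
`r + 1` times. Sets `T` meeting `S` may be added freely, as rows of `B` indexed by `S` vanish.
-/

open Finset Submodule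
open scoped RealInnerProductSpace

theorem sum_powersetCard_sum_compl_insert {α M : Type*} [Fintype α] [DecidableEq α]
    [AddCommMonoid M] (g : Finset α → M) (r : ℕ) :
    ∑ T ∈ powersetCard r univ, ∑ i ∈ Tᶜ, g (insert i T)
      = (r + 1) • ∑ T ∈ powersetCard (r + 1) univ, g T := by
  have hcount : (r + 1) • ∑ T ∈ powersetCard (r + 1) univ, g T
      = ∑ T ∈ powersetCard (r + 1) univ, ∑ _i ∈ T, g T := by
    rw [smul_sum]
    exact sum_congr rfl fun T hT => by rw [sum_const, mem_powersetCard_univ.mp hT]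
  rw [hcount, sum_sigma', sum_sigma']
  refine sum_nbij' (fun x => ⟨insert x.2 x.1, x.2⟩) (fun x => ⟨x.1.erase x.2, x.2⟩)
    ?_ ?_ ?_ ?_ ?_ <;> rintro ⟨T, i⟩ h <;>
    simp only [mem_sigma, mem_powersetCard_univ, mem_compl] at h ⊢
  · simp [card_insert_of_notMem h.2, h.1]
  · simp [card_erase_of_mem h.2, h.1]
  · simp [erase_insert h.2]
  · simp [insert_erase h.2]

section Gram
variable {E : Type*} [NormedAddCommGroup E] [InnerProductSpace ℝ E] {ι : Type*} [Fintype ι]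

theorem gram_sum_smul (C : Matrix ι ι ℝ) (v : ι → E) :
    gram ℝ (fun i => ∑ k, C i k • v k) = C * gram ℝ v * Cᵀ := by
  ext i j
  simp only [gram_apply, mul_apply, transpose_apply, sum_inner, inner_sum, real_inner_smul_left,
    real_inner_smul_right, sum_mul]
  exact sum_congr rfl fun k _ => sum_congr rfl fun l _ => by ring

variable [DecidableEq ι]

theorem det_gram_sumElim {v : ι → E} {w p : E} (hp : p ∈ span ℝ (Set.range v))
    (hwp : w - p ∈ (span ℝ (Set.range v))ᗮ) :
    (gram ℝ (Sum.elim v fun _ : Unit => w)).det = (gram ℝ v).det * ‖w - p‖ ^ 2 := by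
  obtain ⟨c, rfl⟩ := (mem_span_range_iff_exists_fun ℝ).mp hp
  set h := w - ∑ k, c k • v k
  set C : Matrix (ι ⊕ Unit) (ι ⊕ Unit) ℝ := fromBlocks 1 0 (of fun _ k => c k) 1
  have hfamily :
      Sum.elim v (fun _ : Unit => w) = fun x => ∑ y, C x y • Sum.elim v (fun _ => h) y := by
    funext x
    rcases x with i | _ <;> simp [C, h, Fintype.sum_sum_type, one_apply, ite_smul]
  have hperp (i : ι) : ⟪v i, h⟫ = 0 := hwp (v i) (subset_span ⟨i, rfl⟩)
  have hblocks : gram ℝ (Sum.elim v fun _ : Unit => h)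
      = fromBlocks (gram ℝ v) 0 0 (of fun _ _ => ‖h‖ ^ 2) := by
    ext (i | _) (j | _) <;> simp [gram_apply, hperp, real_inner_comm]
  have hC : C.det = 1 := by simp [C]
  rw [hfamily, gram_sum_smul, det_mul, det_mul, det_transpose, hC, hblocks, det_fromBlocks_zero₁₂]
  simp

end Gram

section Residual
variable {E : Type*} [NormedAddCommGroup E] [InnerProductSpace ℝ E] {α : Type*}

def spanOn (u : α → E) (T : Finset α) : Submodule ℝ E :=
  span ℝ (Set.range fun s : T => u s)

instance (u : α → E) (T : Finset α) : FiniteDimensional ℝ (spanOn u T) :=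
  FiniteDimensional.span_of_finite ℝ (Set.finite_range _)

noncomputable def residualOn (u : α → E) (T : Finset α) (i : α) : E :=
  u i - (spanOn u T).starProjection (u i)

theorem mem_spanOn (u : α → E) {T : Finset α} {i : α} (hi : i ∈ T) : u i ∈ spanOn u T :=
  subset_span ⟨⟨i, hi⟩, rfl⟩

theorem spanOn_le_iff {u : α → E} {T : Finset α} {K : Submodule ℝ E} :
    spanOn u T ≤ K ↔ ∀ i ∈ T, u i ∈ K := by
  simp [spanOn, span_le, Set.range_subset_iff]

theorem residualOn_mem_orthogonal (u : α → E) (T : Finset α) (i : α) :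
    residualOn u T i ∈ (spanOn u T)ᗮ :=
  sub_starProjection_mem_orthogonal _

theorem residualOn_of_mem (u : α → E) {T : Finset α} {i : α} (hi : i ∈ T) :
    residualOn u T i = 0 := by
  rw [residualOn, starProjection_eq_self_iff.mpr (mem_spanOn u hi), sub_self]

theorem spanOn_residualOn_le_orthogonal (u : α → E) (S T : Finset α) :
    spanOn (residualOn u S) T ≤ (spanOn u S)ᗮ :=
  spanOn_le_iff.mpr fun i _ => residualOn_mem_orthogonal u S i

variable [DecidableEq α]

noncomputable def gramDetOn (u : α → E) (T : Finset α) : ℝ :=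
  (gram ℝ fun s : T => u s).det

theorem spanOn_union (u : α → E) (S T : Finset α) :
    spanOn u (S ∪ T) = spanOn u S ⊔ spanOn (residualOn u S) T := by
  have hS : spanOn u S ≤ spanOn u (S ∪ T) :=
    spanOn_le_iff.mpr fun i hi => mem_spanOn u (mem_union_left T hi)
  have hproj (i : α) : (spanOn u S).starProjection (u i) ∈ spanOn u S ⊔ spanOn (residualOn u S) T :=
    mem_sup_left (starProjection_apply_mem _ _)
  refine le_antisymm (spanOn_le_iff.mpr fun i hi => ?_)
    (sup_le hS (spanOn_le_iff.mpr fun i hi => ?_))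
  · rcases mem_union.mp hi with hiS | hiT
    · exact mem_sup_left (mem_spanOn u hiS)
    · rw [← sub_add_cancel (u i) ((spanOn u S).starProjection (u i))]
      exact add_mem (mem_sup_right (mem_spanOn _ hiT)) (hproj i)
  · exact sub_mem (mem_spanOn u (mem_union_right S hi)) (hS (starProjection_apply_mem _ _))

theorem residualOn_union (u : α → E) (S T : Finset α) :
    residualOn u (S ∪ T) = residualOn (residualOn u S) T := by
  funext i
  set b := residualOn u S
  have hsup := spanOn_union u S T
  suffices (spanOn u (S ∪ T)).starProjection (u i)
      = (spanOn u S).starProjection (u i) + (spanOn b T).starProjection (b i) by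
    rw [residualOn, residualOn, this]; simp only [b, residualOn]; abel
  refine eq_starProjection_of_mem_orthogonal ?_ ?_
  · rw [hsup]
    exact add_mem (mem_sup_left (starProjection_apply_mem _ _))
      (mem_sup_right (starProjection_apply_mem _ _))
  · have hres : u i - ((spanOn u S).starProjection (u i) + (spanOn b T).starProjection (b i))
        = residualOn b T i := by simp only [residualOn, b]; abel
    rw [hres, hsup, ← inf_orthogonal]
    refine ⟨?_, residualOn_mem_orthogonal b T i⟩
    exact sub_mem (residualOn_mem_orthogonal u S i)
      (spanOn_residualOn_le_orthogonal u S T (starProjection_apply_mem _ _))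

theorem gramDetOn_empty (u : α → E) : gramDetOn u ∅ = 1 := det_isEmpty

theorem gramDetOn_insert (u : α → E) {T : Finset α} {i : α} (hi : i ∉ T) :
    gramDetOn u (insert i T) = gramDetOn u T * ‖residualOn u T i‖ ^ 2 := by
  let e : _ ≃ T ⊕ Unit := (subtypeInsertEquivOption hi).trans (Equiv.optionEquivSumPUnit T)
  have hfamily : (fun x => u (e.symm x)) = Sum.elim (fun s : T => u s) fun _ : Unit => u i := by
    funext x; rcases x with s | _ <;> rfl
  rw [gramDetOn, ← det_submatrix_equiv_self e.symm]
  change (gram ℝ fun x => u (e.symm x)).det = _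
  rw [hfamily]
  exact det_gram_sumElim (starProjection_apply_mem (spanOn u T) (u i))
    (residualOn_mem_orthogonal u T i)

theorem gramDetOn_union (u : α → E) {S T : Finset α} (hST : Disjoint S T) :
    gramDetOn u (S ∪ T) = gramDetOn u S * gramDetOn (residualOn u S) T := by
  induction T using Finset.induction_on with
  | empty => rw [union_empty, gramDetOn_empty, mul_one]
  | @insert a T ha ih =>
    have haS : a ∉ S := disjoint_right.mp hST (mem_insert_self a T)
    rw [union_insert, gramDetOn_insert u (by simp [haS, ha]),
      ih (hST.mono_right (subset_insert a T)), gramDetOn_insert _ ha, residualOn_union, mul_assoc]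

theorem gramDetOn_residualOn_of_not_disjoint (u : α → E) {S T : Finset α} (hST : ¬Disjoint S T) :
    gramDetOn (residualOn u S) T = 0 := by
  obtain ⟨i, hiS, hiT⟩ := not_disjoint_iff.mp hST
  by_contra h
  exact (det_gram_ne_zero_iff_linearIndependent.mp h).ne_zero ⟨i, hiT⟩ (residualOn_of_mem u hiS)

theorem gramDetOn_mul_sum_norm_residualOn_sq [Fintype α] (u : α → E) (T : Finset α) :
    gramDetOn u T * ∑ i, ‖residualOn u T i‖ ^ 2 = ∑ i ∈ Tᶜ, gramDetOn u (insert i T) := by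
  rw [← sum_add_sum_compl T, sum_eq_zero fun i hi => by simp [residualOn_of_mem u hi], zero_add,
    mul_sum]
  exact sum_congr rfl fun i hi => (gramDetOn_insert u (mem_compl.mp hi)).symm

theorem sum_gramDetOn_union_mul_sum_norm_residualOn_sq [Fintype α] (u : α → E) (S : Finset α)
    (r : ℕ) :
    ∑ T ∈ powersetCard r (univ \ S), gramDetOn u (S ∪ T) * ∑ i, ‖residualOn u (S ∪ T) i‖ ^ 2
      = (r + 1) * gramDetOn u S *
          ∑ T ∈ powersetCard (r + 1) univ, gramDetOn (residualOn u S) T := by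
  set b := residualOn u S
  have hdisj {T : Finset α} : Disjoint S T ↔ T ⊆ univ \ S := by
    rw [subset_sdiff, disjoint_comm]; simp
  calc _ = gramDetOn u S *
        ∑ T ∈ powersetCard r (univ \ S), gramDetOn b T * ∑ i, ‖residualOn b T i‖ ^ 2 := by
        rw [mul_sum]
        refine sum_congr rfl fun T hT => ?_
        rw [gramDetOn_union u (hdisj.mpr (mem_powersetCard.mp hT).1), residualOn_union, mul_assoc]
    _ = gramDetOn u S * ∑ T ∈ powersetCard r univ, gramDetOn b T * ∑ i, ‖residualOn b T i‖ ^ 2 := by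
        congr 1
        refine sum_subset (powersetCard_mono (subset_univ _)) fun T hT hTS => ?_
        have hST : ¬Disjoint S T := fun h =>
          hTS (mem_powersetCard.mpr ⟨hdisj.mp h, (mem_powersetCard.mp hT).2⟩)
        rw [gramDetOn_residualOn_of_not_disjoint u hST, zero_mul]
    _ = gramDetOn u S * ∑ T ∈ powersetCard r univ, ∑ i ∈ Tᶜ, gramDetOn b (insert i T) := by
        simp only [gramDetOn_mul_sum_norm_residualOn_sq]
    _ = (r + 1) * gramDetOn u S * ∑ T ∈ powersetCard (r + 1) univ, gramDetOn b T := by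
        rw [sum_powersetCard_sum_compl_insert, nsmul_eq_mul]
        push_cast
        ring

end Residual

section Matrix
variable {m n : ℕ}

-- Definitionally the vector `(WithLp.equiv 2 _).symm (A i)` through which `projSpan` is defined.
abbrev euclideanRow (A : Matrix (Fin m) (Fin n) ℝ) (i : Fin m) : EuclideanSpace ℝ (Fin n) :=
  WithLp.toLp 2 (A i)

theorem euclideanRow_sub_projSpan (A : Matrix (Fin m) (Fin n) ℝ) (T : Finset (Fin m)) :
    euclideanRow (A - projSpan A T) = residualOn (euclideanRow A) T :=
  rfl

theorem gramDet_eq_gramDetOn (A : Matrix (Fin m) (Fin n) ℝ) (T : Finset (Fin m)) :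
    gramDet A T = gramDetOn (euclideanRow A) T := by
  rw [gramDet, gramDetOn]
  congr 1
  ext i j
  simp [mul_apply, rowSub, gram_apply, PiLp.inner_apply, mul_comm]

theorem frobSq_eq_sum_norm_euclideanRow_sq (M : Matrix (Fin m) (Fin n) ℝ) :
    frobSq M = ∑ i, ‖euclideanRow M i‖ ^ 2 := by
  simp [frobSq, EuclideanSpace.norm_sq_eq]

end Matrix

theorem sum_det_frob_general {m n : ℕ} (A : Matrix (Fin m) (Fin n) ℝ) (S : Finset (Fin m))
    (B : Matrix (Fin m) (Fin n) ℝ) (hB : B = A - projSpan A S) (r : ℕ) :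
    ∑ T ∈ Finset.powersetCard r (Finset.univ \ S),
        gramDet A (S ∪ T) * frobSq (A - projSpan A (S ∪ T))
      = ((r : ℝ) + 1) * gramDet A S *
          ∑ T ∈ Finset.powersetCard (r + 1) (Finset.univ : Finset (Fin m)), gramDet B T := by
  subst hB
  simp only [gramDet_eq_gramDetOn, frobSq_eq_sum_norm_euclideanRow_sq, euclideanRow_sub_projSpan]
  exact sum_gramDetOn_union_mul_sum_norm_residualOn_sq (euclideanRow A) S r

/-- ∑_{T ⊆ [m]\S, |T|=r} det(A_{S∪T} A_{S∪T}ᵀ)·‖A − π_{S∪T}(A)‖_F²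
  = (r+1)·det(A_S A_Sᵀ)·∑_{|T|=r+1} det(B_T B_Tᵀ), where B = A − π_S(A). -/
theorem sum_det_frob {m n : ℕ} (A : Matrix (Fin m) (Fin n) ℝ) (S : Finset (Fin m))
    (B : Matrix (Fin m) (Fin n) ℝ) (hB : B = A - projSpan A S) (r : ℕ) (hr : 1 ≤ r) :
    ∑ T ∈ Finset.powersetCard r (Finset.univ \ S),
        gramDet A (S ∪ T) * frobSq (A - projSpan A (S ∪ T))
      = ((r : ℝ) + 1) * gramDet A S *
          ∑ T ∈ Finset.powersetCard (r + 1) (Finset.univ : Finset (Fin m)), gramDet B T :=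
  sum_det_frob_general A S B hB r
end

section
/- Let λ_1 ≥ λ_2 ≥ … ≥ λ_m ≥ 0 be real numbers and let 0 ≤ k < m be an integer. Then e_{k+1}(λ_1,…,λ_m) ≤ (∑_{i=k+1}^m λ_i) · e_k(λ_1,…,λ_m), where e_j denotes the j-th elementary symmetric polynomial in m variables. -/
open BigOperators

/-- For λ_1 ≥ … ≥ λ_m ≥ 0 and 0 ≤ k < m,
e_{k+1}(λ) ≤ (∑_{i=k+1}^m λ_i) · e_k(λ). -/
theorem esymm_succ_le {m : ℕ} (lam : Fin m → ℝ) (hmono : Antitone lam)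
    (hnn : ∀ i, 0 ≤ lam i) (k : ℕ) (hk : k < m) :
    ∑ T ∈ Finset.powersetCard (k + 1) (Finset.univ : Finset (Fin m)), ∏ i ∈ T, lam i
      ≤ (∑ i ∈ Finset.univ.filter (fun i : Fin m => k ≤ (i : ℕ)), lam i) *
          ∑ T ∈ Finset.powersetCard k (Finset.univ : Finset (Fin m)), ∏ i ∈ T, lam i := by
  classical
  have hm : 0 < m := lt_of_le_of_lt (Nat.zero_le k) hk
  set A := Finset.powersetCard (k + 1) (Finset.univ : Finset (Fin m)) with hA
  set B := Finset.univ.filter (fun i : Fin m => k ≤ (i : ℕ)) with hB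
  set C := Finset.powersetCard k (Finset.univ : Finset (Fin m)) with hC
  set F : Finset (Fin m) → Fin m × Finset (Fin m) := fun T =>
    if h : T.Nonempty then (T.max' h, T.erase (T.max' h)) else (⟨0, hm⟩, ∅) with hF
  set g : Fin m × Finset (Fin m) → ℝ := fun p => lam p.1 * ∏ i ∈ p.2, lam i with hg
  have hAne : ∀ T ∈ A, T.Nonempty := by
    intro T hT
    rw [hA, Finset.mem_powersetCard] at hT
    exact Finset.card_pos.mp (by omega)
  have hcard : ∀ T ∈ A, T.card = k + 1 := by
    intro T hT
    rw [hA, Finset.mem_powersetCard] at hT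
    exact hT.2
  have key : ∀ T ∈ A, (∏ i ∈ T, lam i) = g (F T) := by
    intro T hT
    have h := hAne T hT
    simp only [hF, dif_pos h, hg]
    exact (Finset.mul_prod_erase T lam (T.max'_mem h)).symm
  have himg : ∀ T ∈ A, F T ∈ B ×ˢ C := by
    intro T hT
    have h := hAne T hT
    simp only [hF, dif_pos h]
    rw [Finset.mem_product]
    dsimp only
    constructor
    · -- max index ≥ k
      rw [hB, Finset.mem_filter]
      refine ⟨Finset.mem_univ _, ?_⟩
      by_contra hlt
      push_neg at hlt
      -- T ⊆ image of Fin with index < k... use card bound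
      have hsub : T.image (fun i : Fin m => (i : ℕ)) ⊆ Finset.range (T.max' h + 1) := by
        intro x hx
        simp only [Finset.mem_image] at hx
        obtain ⟨i, hi, rfl⟩ := hx
        rw [Finset.mem_range]
        have := Finset.le_max' T i hi
        exact Nat.lt_succ_of_le this
      have hcardim : (T.image (fun i : Fin m => (i : ℕ))).card = k + 1 := by
        rw [Finset.card_image_of_injective _ Fin.val_injective, hcard T hT]
      have := Finset.card_le_card hsub
      rw [hcardim, Finset.card_range] at this
      omega
    · rw [hC, Finset.mem_powersetCard]
      refine ⟨Finset.subset_univ _, ?_⟩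
      rw [Finset.card_erase_of_mem (T.max'_mem h), hcard T hT]
      omega
  have hinj : ∀ T₁ ∈ A, ∀ T₂ ∈ A, F T₁ = F T₂ → T₁ = T₂ := by
    intro T₁ h₁ T₂ h₂ heq
    have hn₁ := hAne T₁ h₁
    have hn₂ := hAne T₂ h₂
    simp only [hF, dif_pos hn₁, dif_pos hn₂, Prod.mk.injEq] at heq
    have e₁ : T₁ = insert (T₁.max' hn₁) (T₁.erase (T₁.max' hn₁)) :=
      (Finset.insert_erase (T₁.max'_mem hn₁)).symm
    have e₂ : T₂ = insert (T₂.max' hn₂) (T₂.erase (T₂.max' hn₂)) :=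
      (Finset.insert_erase (T₂.max'_mem hn₂)).symm
    rw [e₁, e₂, heq.2, heq.1]
  calc ∑ T ∈ A, ∏ i ∈ T, lam i
      = ∑ T ∈ A, g (F T) := Finset.sum_congr rfl key
    _ = ∑ p ∈ A.image F, g p := (Finset.sum_image hinj).symm
    _ ≤ ∑ p ∈ B ×ˢ C, g p := by
        apply Finset.sum_le_sum_of_subset_of_nonneg
        · intro p hp
          obtain ⟨T, hT, rfl⟩ := Finset.mem_image.mp hp
          exact himg T hT
        · intro p _ _
          exact mul_nonneg (hnn _) (Finset.prod_nonneg fun i _ => hnn i)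
    _ = (∑ i ∈ B, lam i) * ∑ T ∈ C, ∏ i ∈ T, lam i := by
        rw [Finset.sum_product, Finset.sum_mul]
        exact Finset.sum_congr rfl fun j _ => by simp [hg, Finset.mul_sum]
end

section
/- Let n ≥ 1, let 0 < ε, and let A ∈ ℝ^{n×(n+1)} be the matrix with columns indexed 0,1,…,n whose entries are A(i,0) = 1 and A(i,i) = ε for every row i ∈ {1,…,n}, all other entries being 0. Then the characteristic polynomial of A A^T equals (x − (n + ε²)) · (x − ε²)^{n−1}; in particular, the largest singular value of A is √(n+ε²) and all other singular values equal ε. -/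
/-! Since `A = [𝟙 | ε I]`, we have `A Aᵀ = 𝟙 𝟙ᵀ + ε² I`: a rank-one matrix, whose characteristic
polynomial is `(X - 𝟙 ⬝ 𝟙) X^(n-1)`, shifted by a scalar, which substitutes `X - ε²` for `X`. -/

open Matrix Polynomial

namespace Matrix

variable {R : Type*} [CommRing R]

theorem mul_transpose_eq_vecMulVec_add {m l : Type*} {k : ℕ} (A : Matrix m (Fin (k + 1)) R)
    (B : Matrix l (Fin (k + 1)) R) :
    A * Bᵀ = vecMulVec (fun i => A i 0) (fun j => B j 0) +
      A.submatrix id Fin.succ * (B.submatrix id Fin.succ)ᵀ := by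
  ext i j
  simp [mul_apply, vecMulVec_apply, Fin.sum_univ_succ]

variable {n : Type*} [Fintype n] [DecidableEq n]

theorem charpoly_add_scalar (M : Matrix n n R) (μ : R) :
    (M + scalar n μ).charpoly = M.charpoly.comp (X - C μ) := by
  simpa [sub_eq_add_neg] using charpoly_sub_scalar M (-μ)

theorem charpoly_vecMulVec_of_nonempty [Nonempty n] (u v : n → R) :
    (vecMulVec u v).charpoly = (X - C (u ⬝ᵥ v)) * X ^ (Fintype.card n - 1) := by
  rw [charpoly_vecMulVec, sub_mul, ← pow_succ', Nat.sub_add_cancel Fintype.card_pos, smul_eq_C_mul]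

theorem charpoly_vecMulVec_add_scalar [Nonempty n] (u v : n → R) (μ : R) :
    (vecMulVec u v + scalar n μ).charpoly =
      (X - C (u ⬝ᵥ v + μ)) * (X - C μ) ^ (Fintype.card n - 1) := by
  rw [charpoly_add_scalar, charpoly_vecMulVec_of_nonempty]
  simp only [mul_comp, pow_comp, sub_comp, X_comp, C_comp, C_add]
  ring

end Matrix

theorem charpoly_lower_bound_matrix_general (n : ℕ) (hn : 1 ≤ n) (ε : ℝ)
    (A : Matrix (Fin n) (Fin (n + 1)) ℝ)
    (hA : ∀ i j, A i j = if (j : ℕ) = 0 then 1 else if (j : ℕ) = (i : ℕ) + 1 then ε else 0) :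
    (A * Aᵀ).charpoly
      = (Polynomial.X - Polynomial.C ((n : ℝ) + ε^2)) *
          (Polynomial.X - Polynomial.C (ε^2))^(n - 1) := by
  have : Nonempty (Fin n) := Fin.pos_iff_nonempty.mp hn
  have hcol : (fun i => A i 0) = 1 := by ext i; simp [hA]
  have htail : A.submatrix id Fin.succ = scalar (Fin n) ε := by
    ext i j; simp [hA, diagonal_apply, Fin.ext_iff, eq_comm]
  have hAAt : A * Aᵀ = vecMulVec 1 1 + scalar (Fin n) (ε ^ 2) := by
    rw [mul_transpose_eq_vecMulVec_add, hcol, htail]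
    simp [pow_two]
  rw [hAAt, charpoly_vecMulVec_add_scalar, Fintype.card_fin]
  simp

/-- For the n×(n+1) matrix A with A(i,0) = 1, A(i,i) = ε and zeros elsewhere,
the characteristic polynomial of A Aᵀ equals (x − (n+ε²))·(x − ε²)^{n−1}. -/
theorem charpoly_lower_bound_matrix (n : ℕ) (hn : 1 ≤ n) (ε : ℝ) (hε : 0 < ε)
    (A : Matrix (Fin n) (Fin (n + 1)) ℝ)
    (hA : ∀ i j, A i j = if (j : ℕ) = 0 then 1 else if (j : ℕ) = (i : ℕ) + 1 then ε else 0) :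
    (A * Aᵀ).charpoly
      = (Polynomial.X - Polynomial.C ((n : ℝ) + ε^2)) *
          (Polynomial.X - Polynomial.C (ε^2))^(n - 1) :=
  charpoly_lower_bound_matrix_general n hn ε A hA
end

section
/- Let n ≥ 2, let 0 < ε, and let A ∈ ℝ^{n×(n+1)} be the matrix with columns indexed 0,1,…,n whose entries are A(i,0) = 1 and A(i,i) = ε for every row i ∈ {1,…,n}, all other entries being 0. Then for every i ∈ {1,…,n}, ‖A − π_{{i}}(A)‖_2² = ε²(n + ε²)/(1 + ε²). -/
open Matrix BigOperators

/-!
Row `k` of `A` is `a_k = e₀ + ε e_k`, and `π_{{i}}` sends it to `⟪a_i, a_k⟫ / ‖a_i‖² • a_i`, so the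
residual `R = A - π_{{i}}(A)` has row `i` zero and rows `a_k - a_i / (1 + ε²)` otherwise. As
`‖R‖ = ‖Rᵀ‖`, it suffices to study `‖Rᵀ y‖² = ε² / (1 + ε²) · s² + ε² · q`, where `s` and `q` are
the sum and the sum of squares of the `y_k`, `k ≠ i`. Cauchy–Schwarz `s² ≤ (n - 1) q` bounds it by
`ε² (n + ε²) / (1 + ε²) · ‖y‖²`, with equality at the indicator of `{k ≠ i}`.
-/

open Finset

lemma projSpan_singleton_apply {m n : ℕ} (A : Matrix (Fin m) (Fin n) ℝ) (i k : Fin m)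
    (j : Fin n) : projSpan A {i} k j = (A i ⬝ᵥ A k / (A i ⬝ᵥ A i)) * A i j := by
  set v : Fin m → EuclideanSpace ℝ (Fin n) := fun k => (WithLp.equiv 2 (Fin n → ℝ)).symm (A k)
  have hrange : Set.range (fun s : ({i} : Finset (Fin m)) => v s) = {v i} := by
    ext; simp [eq_comm]
  have hproj : (Submodule.span ℝ (Set.range fun s : ({i} : Finset (Fin m)) => v s)).starProjection
      (v k) = (inner ℝ (v i) (v k) / inner ℝ (v i) (v i)) • v i := by
    rw [hrange, real_inner_self_eq_norm_sq]
    exact Submodule.starProjection_singleton ℝ (v k)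
  change ((Submodule.span ℝ (Set.range fun s : ({i} : Finset (Fin m)) => v s)).starProjection
    (v k)) j = _
  rw [hproj]
  simp only [PiLp.smul_apply, smul_eq_mul, EuclideanSpace.inner_eq_star_dotProduct, star_trivial]
  simp [v, dotProduct_comm]

lemma specNorm_transpose {m n : ℕ} (M : Matrix (Fin m) (Fin n) ℝ) :
    specNorm Mᵀ = specNorm M := by
  have := Matrix.l2_opNorm_conjTranspose M
  rwa [Matrix.conjTranspose_eq_transpose_of_trivial] at this

lemma ContinuousLinearMap.opNorm_sq_eq_of_forall_le_of_eq {E F : Type*}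
    [NormedAddCommGroup E] [NormedSpace ℝ E] [NormedAddCommGroup F] [NormedSpace ℝ F]
    (T : E →L[ℝ] F) {c : ℝ} (hle : ∀ x, ‖T x‖ ^ 2 ≤ c * ‖x‖ ^ 2) {x₀ : E} (hx₀ : x₀ ≠ 0)
    (heq : ‖T x₀‖ ^ 2 = c * ‖x₀‖ ^ 2) : ‖T‖ ^ 2 = c := by
  have hpos : 0 < ‖x₀‖ ^ 2 := by positivity
  have hc : 0 ≤ c := nonneg_of_mul_nonneg_left (heq ▸ sq_nonneg _) hpos
  apply le_antisymm
  · refine (Real.le_sqrt (norm_nonneg _) hc).mp (T.opNorm_le_bound (Real.sqrt_nonneg c) fun x => ?_)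
    rw [← Real.sqrt_sq (norm_nonneg x), ← Real.sqrt_mul hc]
    exact Real.le_sqrt_of_sq_le (hle x)
  · refine le_of_mul_le_mul_right ?_ hpos
    rw [← heq, ← mul_pow]
    exact pow_le_pow_left₀ (norm_nonneg _) (T.le_opNorm x₀) 2

lemma Fin.cast_card_univ_erase {n : ℕ} (i : Fin n) : (#(univ.erase i) : ℝ) = n - 1 := by
  rw [card_erase_of_mem (mem_univ i), card_univ, Fintype.card_fin,
    Nat.cast_sub (Nat.one_le_of_lt i.isLt), Nat.cast_one]

def spikeMatrix (n : ℕ) (ε : ℝ) : Matrix (Fin n) (Fin (n + 1)) ℝ :=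
  fun i j => if (j : ℕ) = 0 then 1 else if (j : ℕ) = (i : ℕ) + 1 then ε else 0

namespace spikeMatrix

variable {n : ℕ} {ε : ℝ}

@[simp] lemma apply_zero (k : Fin n) : spikeMatrix n ε k 0 = 1 := by
  simp [spikeMatrix]

@[simp] lemma apply_succ (k l : Fin n) : spikeMatrix n ε k l.succ = if l = k then ε else 0 := by
  simp [spikeMatrix, Fin.val_inj]

lemma dotProduct_row (k l : Fin n) :
    spikeMatrix n ε k ⬝ᵥ spikeMatrix n ε l = if k = l then 1 + ε ^ 2 else 1 := by
  rw [dotProduct, Fin.sum_univ_succ]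
  by_cases h : k = l
  · simp [h, sq]
  · simp [h, Ne.symm h]

lemma sub_projSpan_apply (i k : Fin n) (j : Fin (n + 1)) :
    (spikeMatrix n ε - projSpan (spikeMatrix n ε) {i}) k j =
      if k = i then 0 else spikeMatrix n ε k j - spikeMatrix n ε i j / (1 + ε ^ 2) := by
  rw [Matrix.sub_apply, projSpan_singleton_apply, dotProduct_row, dotProduct_row]
  by_cases h : k = i
  · subst h
    have : 1 + ε ^ 2 ≠ 0 := by positivity
    simp [this]
  · simp [h, Ne.symm h, div_eq_inv_mul]

/-- The quadratic form `y ↦ ‖(A - π_{{i}}(A))ᵀ y‖²`, see `sum_sq_transpose_sub_projSpan_mulVec`. -/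
noncomputable def residualGram (ε : ℝ) (i : Fin n) (y : Fin n → ℝ) : ℝ :=
  ε ^ 2 / (1 + ε ^ 2) * (∑ k ∈ univ.erase i, y k) ^ 2 + ε ^ 2 * ∑ k ∈ univ.erase i, y k ^ 2

lemma transpose_sub_projSpan_mulVec_apply (i : Fin n) (y : Fin n → ℝ) (j : Fin (n + 1)) :
    ((spikeMatrix n ε - projSpan (spikeMatrix n ε) {i})ᵀ *ᵥ y) j =
      ∑ k ∈ univ.erase i, y k * (spikeMatrix n ε k j - spikeMatrix n ε i j / (1 + ε ^ 2)) := by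
  rw [Matrix.mulVec, dotProduct, ← Finset.add_sum_erase _ _ (mem_univ i)]
  simp only [Matrix.transpose_apply, sub_projSpan_apply, if_pos, zero_mul, zero_add]
  refine Finset.sum_congr rfl fun k hk => ?_
  rw [if_neg (ne_of_mem_erase hk), mul_comm]

lemma sum_sq_transpose_sub_projSpan_mulVec (i : Fin n) (y : Fin n → ℝ) :
    ∑ j, ((spikeMatrix n ε - projSpan (spikeMatrix n ε) {i})ᵀ *ᵥ y) j ^ 2 =
      residualGram ε i y := by
  have hd : 1 + ε ^ 2 ≠ 0 := by positivity
  have col_zero : ∑ k ∈ univ.erase i,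
      y k * (spikeMatrix n ε k 0 - spikeMatrix n ε i 0 / (1 + ε ^ 2))
        = ε ^ 2 / (1 + ε ^ 2) * ∑ k ∈ univ.erase i, y k := by
    simp only [apply_zero, mul_sum]
    refine Finset.sum_congr rfl fun k _ => ?_
    field_simp; ring
  have col_self : ∑ k ∈ univ.erase i,
      y k * (spikeMatrix n ε k i.succ - spikeMatrix n ε i i.succ / (1 + ε ^ 2))
        = -(ε / (1 + ε ^ 2)) * ∑ k ∈ univ.erase i, y k := by
    rw [mul_sum]
    refine Finset.sum_congr rfl fun k hk => ?_
    simp [Ne.symm (ne_of_mem_erase hk)]; ring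
  have col_other (l : Fin n) (hl : l ≠ i) : ∑ k ∈ univ.erase i,
      y k * (spikeMatrix n ε k l.succ - spikeMatrix n ε i l.succ / (1 + ε ^ 2))
        = ε * y l := by
    simp [hl, mul_comm]
  have cols_other : ∑ l ∈ univ.erase i,
      ((spikeMatrix n ε - projSpan (spikeMatrix n ε) {i})ᵀ *ᵥ y) l.succ ^ 2
        = ε ^ 2 * ∑ l ∈ univ.erase i, y l ^ 2 := by
    rw [mul_sum]
    refine Finset.sum_congr rfl fun l hl => ?_
    rw [transpose_sub_projSpan_mulVec_apply, col_other l (ne_of_mem_erase hl), mul_pow]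
  rw [Fin.sum_univ_succ, ← Finset.add_sum_erase _ _ (mem_univ i), cols_other,
    transpose_sub_projSpan_mulVec_apply, transpose_sub_projSpan_mulVec_apply, col_zero, col_self,
    residualGram]
  field_simp
  ring

lemma residualGram_le (i : Fin n) (y : Fin n → ℝ) :
    residualGram ε i y ≤ ε ^ 2 * (n + ε ^ 2) / (1 + ε ^ 2) * ∑ k, y k ^ 2 := by
  have hcs : (∑ k ∈ univ.erase i, y k) ^ 2 ≤ (n - 1) * ∑ k ∈ univ.erase i, y k ^ 2 := by
    have := sq_sum_le_card_mul_sum_sq (s := univ.erase i) (f := y)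
    rwa [Fin.cast_card_univ_erase] at this
  have hsub : ∑ k ∈ univ.erase i, y k ^ 2 ≤ ∑ k, y k ^ 2 :=
    sum_le_sum_of_subset_of_nonneg (erase_subset i univ) fun k _ _ => sq_nonneg (y k)
  rw [residualGram]
  calc _ ≤ ε ^ 2 / (1 + ε ^ 2) * ((n - 1) * ∑ k ∈ univ.erase i, y k ^ 2) +
        ε ^ 2 * ∑ k ∈ univ.erase i, y k ^ 2 := by gcongr
    _ = ε ^ 2 * (n + ε ^ 2) / (1 + ε ^ 2) * ∑ k ∈ univ.erase i, y k ^ 2 := by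
        field_simp; ring
    _ ≤ _ := by gcongr

lemma residualGram_of_indicator (i : Fin n) (y : Fin n → ℝ) (hyi : y i = 0)
    (hy : ∀ k ≠ i, y k = 1) :
    residualGram ε i y = ε ^ 2 * (n + ε ^ 2) / (1 + ε ^ 2) * ∑ k, y k ^ 2 := by
  have hs : ∑ k ∈ univ.erase i, y k = n - 1 := by
    rw [sum_congr rfl fun k hk => hy k (ne_of_mem_erase hk), sum_const, nsmul_one,
      Fin.cast_card_univ_erase]
  have hq : ∑ k ∈ univ.erase i, y k ^ 2 = n - 1 := by
    rw [sum_congr rfl fun k hk => by rw [hy k (ne_of_mem_erase hk), one_pow], sum_const,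
      nsmul_one, Fin.cast_card_univ_erase]
  rw [residualGram, ← add_sum_erase _ _ (mem_univ i), hyi, hs, hq]
  field_simp
  ring

end spikeMatrix

theorem spectral_norm_after_projection_general (n : ℕ) (hn : 2 ≤ n) (ε : ℝ)
    (A : Matrix (Fin n) (Fin (n + 1)) ℝ)
    (hA : ∀ i j, A i j = if (j : ℕ) = 0 then 1 else if (j : ℕ) = (i : ℕ) + 1 then ε else 0)
    (i : Fin n) :
    (specNorm (A - projSpan A {i}))^2 = ε^2 * ((n : ℝ) + ε^2) / (1 + ε^2) := by
  obtain rfl : A = spikeMatrix n ε := Matrix.ext hA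
  have hnorm (y : EuclideanSpace ℝ (Fin n)) :
      ‖LinearMap.toContinuousLinearMap
        (toEuclideanLin (spikeMatrix n ε - projSpan (spikeMatrix n ε) {i})ᵀ) y‖ ^ 2 =
      spikeMatrix.residualGram ε i y := by
    rw [EuclideanSpace.real_norm_sq_eq]
    exact spikeMatrix.sum_sq_transpose_sub_projSpan_mulVec i y
  have : Nontrivial (Fin n) := Fin.nontrivial_iff_two_le.mpr hn
  obtain ⟨k, hk⟩ := exists_ne i
  rw [← specNorm_transpose]
  refine ContinuousLinearMap.opNorm_sq_eq_of_forall_le_of_eq _ (fun y => ?_)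
    (x₀ := WithLp.toLp 2 fun l => if l = i then 0 else 1) ?_ ?_
  · rw [hnorm, EuclideanSpace.real_norm_sq_eq]
    exact spikeMatrix.residualGram_le i y
  · intro h
    simpa [hk] using congr(WithLp.ofLp $h k)
  · rw [hnorm, EuclideanSpace.real_norm_sq_eq]
    exact spikeMatrix.residualGram_of_indicator i _ (if_pos rfl) fun l hl => if_neg hl

/-- For the n×(n+1) matrix A with A(i,0) = 1, A(i,i) = ε and zeros elsewhere,
‖A − π_{{i}}(A)‖₂² = ε²(n+ε²)/(1+ε²) for every row i. -/
theorem spectral_norm_after_projection (n : ℕ) (hn : 2 ≤ n) (ε : ℝ) (hε : 0 < ε)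
    (A : Matrix (Fin n) (Fin (n + 1)) ℝ)
    (hA : ∀ i j, A i j = if (j : ℕ) = 0 then 1 else if (j : ℕ) = (i : ℕ) + 1 then ε else 0)
    (i : Fin n) :
    (specNorm (A - projSpan A {i}))^2 = ε^2 * ((n : ℝ) + ε^2) / (1 + ε^2) :=
  spectral_norm_after_projection_general n hn ε A hA i
end

section
/- Let n ≥ 2, let 0 < ε ≤ 1, and let A ∈ ℝ^{n×(n+1)} be the matrix with columns indexed 0,1,…,n whose entries are A(i,0) = 1 and A(i,i) = ε for every row i ∈ {1,…,n}, all other entries being 0. Then for every i ∈ {1,…,n}, ‖A − π_{{i}}(A)‖_2 ≥ (√n/2) · ε, where ε equals the second-largest singular value of A, i.e., ε = ‖A − A_1‖_2 with A_1 the best rank-1 approximation of A in spectral norm. -/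
open Matrix BigOperators

/-!
A vector `x` orthogonal to the rows indexed by `S` is orthogonal to every row of `π_S(A)`, which
lies in their span; hence `(A - π_S(A)) x = A x`. For `S = {i}` take
`x = ((n - 1) ε, 1, …, 1, -(n - 1), 1, …, 1)`, with `-(n - 1)` in column `i`: it is orthogonal to
row `i` = `(1, ε eᵢ)`, and `(A x)_j = n ε` for every `j ≠ i`. So `‖A x‖² = (n - 1) n² ε²`, while
`‖x‖² = (n - 1) ((n - 1) (1 + ε²) + 1) ≤ 4 n (n - 1)` for `ε ≤ 1`.
-/

theorem projSpan_mulVec_eq_zero {m n : ℕ} (A : Matrix (Fin m) (Fin n) ℝ) (S : Finset (Fin m))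
    (x : Fin n → ℝ) (hx : ∀ s ∈ S, A s ⬝ᵥ x = 0) : projSpan A S *ᵥ x = 0 := by
  set K := Submodule.span ℝ (Set.range (fun s : S => (WithLp.equiv 2 (Fin n → ℝ)).symm (A s)))
  have hK : K ≤ (ℝ ∙ WithLp.toLp 2 x)ᗮ := by
    refine Submodule.span_le.mpr ?_
    rintro _ ⟨s, rfl⟩
    rw [SetLike.mem_coe, Submodule.mem_orthogonal_singleton_iff_inner_left]
    simpa [EuclideanSpace.inner_toLp_toLp, dotProduct_comm] using hx s s.2
  funext j
  have := (Submodule.mem_orthogonal_singleton_iff_inner_left).mp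
    (hK (K.orthogonalProjectionOnto ((WithLp.equiv 2 (Fin n → ℝ)).symm (A j))).2)
  simpa [K, projSpan, mulVec, dotProduct, PiLp.inner_apply, mul_comm] using this

theorem norm_mulVec_le_specNorm {m n : ℕ} (M : Matrix (Fin m) (Fin n) ℝ) (x : Fin n → ℝ) :
    ‖WithLp.toLp 2 (M *ᵥ x)‖ ≤ specNorm M * ‖WithLp.toLp 2 x‖ := by
  simpa [specNorm] using (LinearMap.toContinuousLinearMap (toEuclideanLin M)).le_opNorm
    (WithLp.toLp 2 x)

theorem le_specNorm_of_sq_mul_le {m n : ℕ} (M : Matrix (Fin m) (Fin n) ℝ) {x : Fin n → ℝ}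
    (hx : x ≠ 0) {c : ℝ} (h : c ^ 2 * ∑ l, x l ^ 2 ≤ ∑ j, (M *ᵥ x) j ^ 2) : c ≤ specNorm M := by
  have hpos : 0 < ‖WithLp.toLp 2 x‖ := by simpa using hx
  have hc : |c| * ‖WithLp.toLp 2 x‖ ≤ ‖WithLp.toLp 2 (M *ᵥ x)‖ := by
    refine (sq_le_sq₀ (by positivity) (norm_nonneg _)).1 ?_
    simpa [mul_pow, EuclideanSpace.real_norm_sq_eq] using h
  exact (le_abs_self c).trans <| le_of_mul_le_mul_right
    (hc.trans (norm_mulVec_le_specNorm M x)) hpos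

theorem Fintype.sum_ite_eq_card_mul_add {ι R : Type*} [Fintype ι] [DecidableEq ι] [CommRing R]
    (i : ι) (a b : R) : ∑ j, (if j = i then a else b) = Fintype.card ι * b + (a - b) := by
  have hsplit : ∀ j, (if j = i then a else b) = b + if j = i then a - b else 0 := by
    intro j; split_ifs <;> ring
  simp [hsplit, Finset.sum_add_distrib]

section SpikeMatrix

def IsSpikeMatrix {n : ℕ} (ε : ℝ) (A : Matrix (Fin n) (Fin (n + 1)) ℝ) : Prop :=
  ∀ i j, A i j = if (j : ℕ) = 0 then 1 else if (j : ℕ) = (i : ℕ) + 1 then ε else 0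

variable {n : ℕ} {ε : ℝ} {A : Matrix (Fin n) (Fin (n + 1)) ℝ}

theorem row_dotProduct_eq (hA : IsSpikeMatrix ε A) (j : Fin n) (v : Fin (n + 1) → ℝ) :
    A j ⬝ᵥ v = v 0 + ε * v j.succ := by
  simp [dotProduct, Fin.sum_univ_succ, hA j, Fin.val_eq_val, ite_mul]

variable (n ε) in
def testVector (i : Fin n) : Fin (n + 1) → ℝ :=
  Fin.cons ((n - 1) * ε) fun k => if k = i then -(n - 1 : ℝ) else 1

theorem testVector_ne_zero (hn : 2 ≤ n) (i : Fin n) : testVector n ε i ≠ 0 := by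
  intro h
  have hi := congr_fun h i.succ
  simp [testVector] at hi
  have : (2 : ℝ) ≤ n := by exact_mod_cast hn
  linarith

theorem sum_sq_testVector (i : Fin n) :
    ∑ l, testVector n ε i l ^ 2 = (n - 1) ^ 2 * (ε ^ 2 + 1) + (n - 1) := by
  simp only [testVector, Fin.sum_univ_succ, Fin.cons_zero, Fin.cons_succ, ite_pow,
    Fintype.sum_ite_eq_card_mul_add, Fintype.card_fin]
  ring

theorem row_dotProduct_testVector (hA : IsSpikeMatrix ε A) (i j : Fin n) :
    A j ⬝ᵥ testVector n ε i = if j = i then 0 else n * ε := by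
  rw [row_dotProduct_eq hA]
  simp only [testVector, Fin.cons_zero, Fin.cons_succ]
  split_ifs <;> ring

theorem sum_sq_mulVec_testVector (hA : IsSpikeMatrix ε A) (i : Fin n) :
    ∑ j, (A *ᵥ testVector n ε i) j ^ 2 = (n - 1) * (n * ε) ^ 2 := by
  simp only [mulVec, row_dotProduct_testVector hA, ite_pow, Fintype.sum_ite_eq_card_mul_add,
    Fintype.card_fin]
  ring

end SpikeMatrix

/-- For the n×(n+1) matrix A with A(i,0) = 1, A(i,i) = ε and zeros elsewhere and 0 < ε ≤ 1,
‖A − π_{{i}}(A)‖₂ ≥ (√n/2)·ε for every row i (and ε = ‖A − A₁‖₂ is the second-largest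
singular value of A). -/
theorem lower_bound_one_row (n : ℕ) (hn : 2 ≤ n) (ε : ℝ) (hε : 0 < ε) (hε1 : ε ≤ 1)
    (A : Matrix (Fin n) (Fin (n + 1)) ℝ)
    (hA : ∀ i j, A i j = if (j : ℕ) = 0 then 1 else if (j : ℕ) = (i : ℕ) + 1 then ε else 0)
    (i : Fin n) :
    specNorm (A - projSpan A {i}) ≥ (Real.sqrt n / 2) * ε := by
  have hproj : projSpan A {i} *ᵥ testVector n ε i = 0 :=
    projSpan_mulVec_eq_zero A {i} _ (by simp [row_dotProduct_testVector hA])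
  refine le_specNorm_of_sq_mul_le _ (testVector_ne_zero (ε := ε) hn i) ?_
  rw [sub_mulVec, hproj, sub_zero, sum_sq_testVector, sum_sq_mulVec_testVector hA, mul_pow,
    div_pow, Real.sq_sqrt (Nat.cast_nonneg n)]
  have h2n : (2 : ℝ) ≤ n := by exact_mod_cast hn
  have hn1 : (0 : ℝ) ≤ n - 1 := by linarith
  have hε2 : ε ^ 2 ≤ 1 := pow_le_one₀ hε.le hε1
  calc (n : ℝ) / 2 ^ 2 * ε ^ 2 * ((n - 1) ^ 2 * (ε ^ 2 + 1) + (n - 1))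
      = (n - 1) * n * ε ^ 2 / 4 * ((n - 1) * (ε ^ 2 + 1) + 1) := by ring
    _ ≤ (n - 1) * n * ε ^ 2 / 4 * (4 * n) := by
      gcongr
      nlinarith [mul_le_mul_of_nonneg_left hε2 hn1]
    _ = (n - 1) * (n * ε) ^ 2 := by ring
end
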